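/- Let E : M₄(ℂ) → M₂(ℂ) ⊗ ℂI be the trace-preserving conditional expectation, i.e., the linear map sending σ_i ⊗ σ_j to σ_i ⊗ I if j = 0 and to 0 if 1 ≤ j ≤ 3 (for all 0 ≤ i ≤ 3). Let N = exp(iα σ₁⊗σ₁) · exp(iβ σ₂⊗σ₂) · exp(iγ σ₃⊗σ₃) for real α, β, γ. Then E(N(I ⊗ σ₁)N*) = sin 2β sin 2γ (σ₁ ⊗ I), E(N(I ⊗ σ₂)N*) = sin 2α sin 2γ (σ₂ ⊗ I), and E(N(I ⊗ σ₃)N*) = sin 2α sin 2β (σ₃ ⊗ I). -/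

import Mathlib

open scoped Kronecker
open Matrix

noncomputable section

/-- `M₂(ℂ)`. -/
abbrev M2 : Type := Matrix (Fin 2) (Fin 2) ℂ

/-- `M₄(ℂ)`, identified with `M₂(ℂ) ⊗ M₂(ℂ)` via the Kronecker product. -/
abbrev M4 : Type := Matrix (Fin 2 × Fin 2) (Fin 2 × Fin 2) ℂ

/-- The Pauli matrices; `σ 0` is the identity. -/
def σ : Fin 4 → M2
  | 0 => 1
  | 1 => !![0, 1; 1, 0]
  | 2 => !![0, -Complex.I; Complex.I, 0]
  | 3 => !![1, 0; 0, -1]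

/-- `N = exp(iα σ₁⊗σ₁) exp(iβ σ₂⊗σ₂) exp(iγ σ₃⊗σ₃)`. -/
def Nmat (α β γ : ℝ) : M4 :=
  NormedSpace.exp (((α : ℂ) * Complex.I) • (σ 1 ⊗ₖ σ 1)) *
  NormedSpace.exp (((β : ℂ) * Complex.I) • (σ 2 ⊗ₖ σ 2)) *
  NormedSpace.exp (((γ : ℂ) * Complex.I) • (σ 3 ⊗ₖ σ 3))

/-- The Hilbert–Schmidt inner product `⟨x, y⟩ = τ(x* y)` on `M₄(ℂ)`,
with the normalized trace `τ = (1/4) Tr`. -/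
def hsInner (x y : M4) : ℂ := (star x * y).trace / 4

/-! ### Auxiliary lemmas on exponentials -/

set_option maxHeartbeats 1000000

open NormedSpace in
theorem my_exp_idem_aux {𝔸 : Type*} [NormedRing 𝔸] [NormedAlgebra ℂ 𝔸] [CompleteSpace 𝔸]
    (P : 𝔸) (hP : P * P = P) (c : ℂ) :
    exp (c • P) = 1 + (Complex.exp c - 1) • P := by
  have hpow : ∀ n : ℕ, P ^ (n + 1) = P := by
    intro n
    induction n with
    | zero => simp
    | succ k ih => rw [pow_succ, ih, hP]
  have hsum : Summable (fun n : ℕ => ((n.factorial : ℂ))⁻¹ • (c • P) ^ n) :=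
    expSeries_summable' (c • P)
  have hsumc : Summable (fun n : ℕ => ((n.factorial : ℂ))⁻¹ * c ^ n) := by
    simpa [smul_eq_mul] using expSeries_summable' (𝕂 := ℂ) c
  have hsumc' : Summable (fun n : ℕ => (((n+1).factorial : ℂ))⁻¹ * c ^ (n+1)) :=
    (summable_nat_add_iff 1).mpr hsumc
  have hexpc : Complex.exp c = 1 + ∑' n : ℕ, (((n+1).factorial : ℂ))⁻¹ * c ^ (n+1) := by
    rw [Complex.exp_eq_exp_ℂ]
    simp only [exp_eq_tsum ℂ, smul_eq_mul]
    rw [Summable.tsum_eq_zero_add hsumc]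
    norm_num
  have h1 : ∀ n : ℕ, ((n+1).factorial : ℂ)⁻¹ • (c • P) ^ (n+1)
      = ((((n+1).factorial : ℂ))⁻¹ * c ^ (n+1)) • P := by
    intro n
    rw [smul_pow, hpow, smul_smul]
  simp only [exp_eq_tsum ℂ]
  rw [Summable.tsum_eq_zero_add hsum]
  simp only [h1]
  rw [Summable.tsum_smul_const hsumc']
  rw [hexpc]
  simp [add_smul]

open NormedSpace in
theorem my_exp_invol_aux {𝔸 : Type*} [NormedRing 𝔸] [NormedAlgebra ℂ 𝔸] [CompleteSpace 𝔸]
    (G : 𝔸) (hG : G * G = 1) (c : ℂ) :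
    exp (c • G) = Complex.cosh c • 1 + Complex.sinh c • G := by
  set P : 𝔸 := (2:ℂ)⁻¹ • (1 + G) with hPdef
  set Q : 𝔸 := (2:ℂ)⁻¹ • (1 - G) with hQdef
  have hPP : P * P = P := by
    rw [hPdef, smul_mul_smul_comm]
    have h2 : (1 + G) * (1 + G) = (2:ℂ) • (1 + G) := by
      have : (1 + G) * (1 + G) = 1 + G + G + G * G := by noncomm_ring
      rw [this, hG]
      match_scalars <;> ring
    rw [h2, smul_smul]
    norm_num
  have hQQ : Q * Q = Q := by
    rw [hQdef, smul_mul_smul_comm]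
    have h2 : (1 - G) * (1 - G) = (2:ℂ) • (1 - G) := by
      have : (1 - G) * (1 - G) = 1 - G - G + G * G := by noncomm_ring
      rw [this, hG]
      match_scalars <;> ring
    rw [h2, smul_smul]
    norm_num
  have hPQ : P * Q = 0 := by
    rw [hPdef, hQdef, smul_mul_smul_comm]
    have : (1 + G) * (1 - G) = 1 - G * G := by noncomm_ring
    rw [this, hG]
    simp
  have hQP : Q * P = 0 := by
    rw [hPdef, hQdef, smul_mul_smul_comm]
    have : (1 - G) * (1 + G) = 1 - G * G := by noncomm_ring
    rw [this, hG]
    simp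
  clear_value P Q
  have hsplit : c • G = c • P + (-c) • Q := by
    rw [hPdef, hQdef]
    match_scalars <;> ring
  have hcomm : Commute (c • P) ((-c) • Q) := by
    unfold Commute SemiconjBy
    rw [smul_mul_smul_comm, smul_mul_smul_comm, hPQ, hQP]
    simp
  rw [hsplit, exp_add_of_commute_of_mem_ball (𝕂 := ℂ) hcomm
    ((expSeries_radius_eq_top ℂ 𝔸).symm ▸ edist_lt_top _ _)
    ((expSeries_radius_eq_top ℂ 𝔸).symm ▸ edist_lt_top _ _), my_exp_idem_aux P hPP, my_exp_idem_aux Q hQQ]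
  rw [mul_add, add_mul, add_mul, one_mul, mul_one, smul_mul_smul_comm, hPQ, smul_zero]
  rw [hPdef, hQdef]
  have e1 : Complex.cosh c = (Complex.exp c + Complex.exp (-c)) / 2 := rfl
  have e2 : Complex.sinh c = (Complex.exp c - Complex.exp (-c)) / 2 := rfl
  rw [e1, e2]
  simp only [one_mul, add_zero]
  match_scalars <;> ring

theorem my_matrix_exp_invol (G : M4) (hG : G * G = 1) (t : ℝ) :
    NormedSpace.exp (((t : ℂ) * Complex.I) • G)
      = ((Real.cos t : ℂ)) • (1 : M4) + ((Real.sin t : ℂ) * Complex.I) • G := by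
  letI : SeminormedRing M4 := Matrix.linftyOpSemiNormedRing
  letI : NormedRing M4 := Matrix.linftyOpNormedRing
  letI : NormedAlgebra ℂ M4 := Matrix.linftyOpNormedAlgebra
  refine (my_exp_invol_aux G hG ((t : ℂ) * Complex.I)).trans ?_
  rw [Complex.cosh_mul_I, Complex.sinh_mul_I, Complex.ofReal_cos, Complex.ofReal_sin]

/-! ### Pauli matrix multiplication table -/

theorem my_s11 : σ 1 * σ 1 = 1 := by
  show !![0, 1; 1, 0] * !![0, 1; 1, 0] = _
  rw [Matrix.mul_fin_two, Matrix.one_fin_two]; norm_num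
theorem my_s22 : σ 2 * σ 2 = 1 := by
  show !![0, -Complex.I; Complex.I, 0] * !![0, -Complex.I; Complex.I, 0] = _
  rw [Matrix.mul_fin_two, Matrix.one_fin_two]; norm_num [Complex.I_mul_I]
theorem my_s33 : σ 3 * σ 3 = 1 := by
  show !![1, 0; 0, -1] * !![1, 0; 0, -1] = _
  rw [Matrix.mul_fin_two, Matrix.one_fin_two]; norm_num
theorem my_s12 : σ 1 * σ 2 = Complex.I • σ 3 := by
  show !![0, 1; 1, 0] * !![0, -Complex.I; Complex.I, 0] = _
  rw [Matrix.mul_fin_two]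
  ext i j; fin_cases i <;> fin_cases j <;> simp [σ]
theorem my_s21 : σ 2 * σ 1 = (-Complex.I) • σ 3 := by
  show !![0, -Complex.I; Complex.I, 0] * !![0, 1; 1, 0] = _
  rw [Matrix.mul_fin_two]
  ext i j; fin_cases i <;> fin_cases j <;> simp [σ]
theorem my_s23 : σ 2 * σ 3 = Complex.I • σ 1 := by
  show !![0, -Complex.I; Complex.I, 0] * !![1, 0; 0, -1] = _
  rw [Matrix.mul_fin_two]
  ext i j; fin_cases i <;> fin_cases j <;> simp [σ]
theorem my_s32 : σ 3 * σ 2 = (-Complex.I) • σ 1 := by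
  show !![1, 0; 0, -1] * !![0, -Complex.I; Complex.I, 0] = _
  rw [Matrix.mul_fin_two]
  ext i j; fin_cases i <;> fin_cases j <;> simp [σ]
theorem my_s31 : σ 3 * σ 1 = Complex.I • σ 2 := by
  show !![1, 0; 0, -1] * !![0, 1; 1, 0] = _
  rw [Matrix.mul_fin_two]
  ext i j; fin_cases i <;> fin_cases j <;> simp [σ]
theorem my_s13 : σ 1 * σ 3 = (-Complex.I) • σ 2 := by
  show !![0, 1; 1, 0] * !![1, 0; 0, -1] = _
  rw [Matrix.mul_fin_two]
  ext i j; fin_cases i <;> fin_cases j <;> simp [σ]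
theorem my_sH : ∀ i, (σ i)ᴴ = σ i := by
  intro i
  fin_cases i <;>
    · ext a b; fin_cases a <;> fin_cases b <;> simp [σ, Matrix.conjTranspose_apply]

/-! ### Conjugation lemmas -/

/-- `U(t,G) = exp(it G)` for an involution `G`. -/
def Uf (t : ℝ) (G : M4) : M4 :=
  (Real.cos t : ℂ) • (1 : M4) + ((Real.sin t : ℂ) * Complex.I) • G

/-- `V(t,G) = exp(-it G) = U(t,G)⁻¹`. -/
def Vf (t : ℝ) (G : M4) : M4 :=
  (Real.cos t : ℂ) • (1 : M4) - ((Real.sin t : ℂ) * Complex.I) • G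

theorem my_exp_eq_Uf (G : M4) (hG : G * G = 1) (t : ℝ) :
    NormedSpace.exp (((t : ℂ) * Complex.I) • G) = Uf t G :=
  my_matrix_exp_invol G hG t

theorem my_star_exp_eq_Vf (G : M4) (hG : G * G = 1) (hGs : star G = G) (t : ℝ) :
    star (NormedSpace.exp (((t : ℂ) * Complex.I) • G)) = Vf t G := by
  rw [my_matrix_exp_invol G hG t, star_add, star_smul, star_smul, star_one, hGs, Vf]
  rw [sub_eq_add_neg, ← neg_smul]
  congr 1
  · congr 1
    simp [Complex.ext_iff]
  · congr 1
    simp [Complex.ext_iff]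

theorem my_conj_expand (c s : ℂ) (G X : M4) :
    (c • (1:M4) + s • G) * X * (c • (1:M4) - s • G)
      = (c*c) • X - (c*s) • (X*G) + (s*c) • (G*X) - (s*s) • (G*(X*G)) := by
  simp only [add_mul, sub_mul, mul_sub, mul_add, smul_mul_assoc, mul_smul_comm, smul_smul,
    one_mul, mul_one, mul_assoc]
  match_scalars <;> ring

theorem my_conj_anti (t : ℝ) (G X : M4) (hG : G * G = 1) (ha : X * G = -(G * X)) :
    Uf t G * X * Vf t G
      = (Real.cos (2*t) : ℂ) • X + ((Real.sin (2*t) : ℂ) * Complex.I) • (G * X) := by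
  rw [Uf, Vf, my_conj_expand, ha, mul_neg,
    show G * (G * X) = X by rw [← mul_assoc, hG, one_mul]]
  have hI : Complex.I * Complex.I = -1 := Complex.I_mul_I
  match_scalars
  · linear_combination (Complex.sin (t:ℂ))^2 * hI - Complex.cos_two_mul' (x := (t:ℂ))
  · linear_combination (-Complex.I) * Complex.sin_two_mul (x := (t:ℂ))

theorem my_conj_comm (t : ℝ) (G X : M4) (hG : G * G = 1) (hc : G * X = X * G) :
    Uf t G * X * Vf t G = X := by
  rw [Uf, Vf, my_conj_expand, ← hc, show G * (G * X) = X by rw [← mul_assoc, hG, one_mul]]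
  have hI : Complex.I * Complex.I = -1 := Complex.I_mul_I
  match_scalars
  · linear_combination Complex.sin_sq_add_cos_sq (t:ℂ) - (Complex.sin (t:ℂ))^2 * hI
  · ring

theorem my_conj_distrib (U V : M4) (a b : ℂ) (X Y : M4) :
    U * (a • X + b • Y) * V = a • (U * X * V) + b • (U * Y * V) := by
  simp [mul_add, add_mul, smul_mul_assoc, mul_smul_comm]

/-! ### Kronecker product facts -/

theorem my_kron_conjT (A B : M2) : star (A ⊗ₖ B) = Aᴴ ⊗ₖ Bᴴ := by
  ext x y
  simp [Matrix.star_apply, Matrix.conjTranspose_apply, Matrix.kroneckerMap_apply]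

theorem my_kron_herm (i j : Fin 4) : star (σ i ⊗ₖ σ j) = σ i ⊗ₖ σ j := by
  rw [my_kron_conjT, my_sH, my_sH]

theorem my_sq (i : Fin 4) (h : σ i * σ i = 1) : (σ i ⊗ₖ σ i) * (σ i ⊗ₖ σ i) = (1 : M4) := by
  rw [← Matrix.mul_kronecker_mul, h, Matrix.one_kronecker_one]

theorem my_hAA : (σ 1 ⊗ₖ σ 1) * (σ 1 ⊗ₖ σ 1) = (1 : M4) := my_sq 1 my_s11
theorem my_hBB : (σ 2 ⊗ₖ σ 2) * (σ 2 ⊗ₖ σ 2) = (1 : M4) := my_sq 2 my_s22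
theorem my_hCC : (σ 3 ⊗ₖ σ 3) * (σ 3 ⊗ₖ σ 3) = (1 : M4) := my_sq 3 my_s33

theorem my_smul_comb (s : ℂ) (M : M4) :
    (s * Complex.I) • (Complex.I • M) = (-s) • M := by
  rw [smul_smul]
  congr 1
  rw [mul_assoc, Complex.I_mul_I]
  ring

theorem my_smul_comb' (s : ℂ) (M : M4) :
    (s * Complex.I) • ((-Complex.I) • M) = s • M := by
  rw [smul_smul]
  congr 1
  rw [mul_assoc, mul_neg, Complex.I_mul_I]
  ring

/-- Let `E : M₄(ℂ) → M₂(ℂ) ⊗ ℂI` be the trace-preserving conditional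
expectation, i.e. the linear map with `E(σ_i ⊗ σ_j) = σ_i ⊗ I` if `j = 0` and
`E(σ_i ⊗ σ_j) = 0` if `1 ≤ j ≤ 3`.  Then
`E(N(I ⊗ σ₁)N*) = sin 2β sin 2γ (σ₁ ⊗ I)`,
`E(N(I ⊗ σ₂)N*) = sin 2α sin 2γ (σ₂ ⊗ I)`, and
`E(N(I ⊗ σ₃)N*) = sin 2α sin 2β (σ₃ ⊗ I)`. -/
theorem condExp_N_conj_pauli (E : M4 →ₗ[ℂ] M4)
    (hE : ∀ i j : Fin 4,
      E (σ i ⊗ₖ σ j) = if j = 0 then σ i ⊗ₖ (1 : M2) else 0)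
    (α β γ : ℝ) :
    E (Nmat α β γ * ((1 : M2) ⊗ₖ σ 1) * star (Nmat α β γ)) =
        ((Real.sin (2 * β) * Real.sin (2 * γ) : ℝ) : ℂ) • (σ 1 ⊗ₖ (1 : M2)) ∧
    E (Nmat α β γ * ((1 : M2) ⊗ₖ σ 2) * star (Nmat α β γ)) =
        ((Real.sin (2 * α) * Real.sin (2 * γ) : ℝ) : ℂ) • (σ 2 ⊗ₖ (1 : M2)) ∧
    E (Nmat α β γ * ((1 : M2) ⊗ₖ σ 3) * star (Nmat α β γ)) =
        ((Real.sin (2 * α) * Real.sin (2 * β) : ℝ) : ℂ) • (σ 3 ⊗ₖ (1 : M2)) := by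
  have hNdecomp : ∀ X : M4, Nmat α β γ * X * star (Nmat α β γ) =
      Uf α (σ 1 ⊗ₖ σ 1) * (Uf β (σ 2 ⊗ₖ σ 2) *
        (Uf γ (σ 3 ⊗ₖ σ 3) * X * Vf γ (σ 3 ⊗ₖ σ 3)) * Vf β (σ 2 ⊗ₖ σ 2)) *
        Vf α (σ 1 ⊗ₖ σ 1) := by
    intro X
    rw [Nmat, Matrix.star_mul, Matrix.star_mul]
    rw [my_star_exp_eq_Vf _ my_hAA (my_kron_herm 1 1),
      my_star_exp_eq_Vf _ my_hBB (my_kron_herm 2 2),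
      my_star_exp_eq_Vf _ my_hCC (my_kron_herm 3 3),
      my_exp_eq_Uf _ my_hAA, my_exp_eq_Uf _ my_hBB, my_exp_eq_Uf _ my_hCC]
    simp only [mul_assoc]
  refine ⟨?_, ?_, ?_⟩
  · -- goal 1 : X₁ = 1 ⊗ σ₁
    have pC : (σ 3 ⊗ₖ σ 3) * ((1:M2) ⊗ₖ σ 1) = Complex.I • (σ 3 ⊗ₖ σ 2) := by
      rw [← Matrix.mul_kronecker_mul, mul_one, my_s31, Matrix.kronecker_smul]
    have pC' : ((1:M2) ⊗ₖ σ 1) * (σ 3 ⊗ₖ σ 3) = -((σ 3 ⊗ₖ σ 3) * ((1:M2) ⊗ₖ σ 1)) := by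
      rw [pC, ← Matrix.mul_kronecker_mul, one_mul, my_s13, Matrix.kronecker_smul, neg_smul]
    have pB1 : (σ 2 ⊗ₖ σ 2) * ((1:M2) ⊗ₖ σ 1) = (-Complex.I) • (σ 2 ⊗ₖ σ 3) := by
      rw [← Matrix.mul_kronecker_mul, mul_one, my_s21, Matrix.kronecker_smul]
    have pB1' : ((1:M2) ⊗ₖ σ 1) * (σ 2 ⊗ₖ σ 2) = -((σ 2 ⊗ₖ σ 2) * ((1:M2) ⊗ₖ σ 1)) := by
      rw [pB1, ← Matrix.mul_kronecker_mul, one_mul, my_s12, Matrix.kronecker_smul, neg_smul,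
        neg_neg]
    have pB2 : (σ 2 ⊗ₖ σ 2) * (σ 3 ⊗ₖ σ 2) = Complex.I • (σ 1 ⊗ₖ (1:M2)) := by
      rw [← Matrix.mul_kronecker_mul, my_s23, my_s22, Matrix.smul_kronecker]
    have pB2' : (σ 3 ⊗ₖ σ 2) * (σ 2 ⊗ₖ σ 2) = -((σ 2 ⊗ₖ σ 2) * (σ 3 ⊗ₖ σ 2)) := by
      rw [pB2, ← Matrix.mul_kronecker_mul, my_s32, my_s22, Matrix.smul_kronecker, neg_smul]
    have cA1 : (σ 1 ⊗ₖ σ 1) * ((1:M2) ⊗ₖ σ 1) = ((1:M2) ⊗ₖ σ 1) * (σ 1 ⊗ₖ σ 1) := by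
      rw [← Matrix.mul_kronecker_mul, ← Matrix.mul_kronecker_mul, mul_one, one_mul, my_s11]
    have cA2 : (σ 1 ⊗ₖ σ 1) * (σ 2 ⊗ₖ σ 3) = (σ 2 ⊗ₖ σ 3) * (σ 1 ⊗ₖ σ 1) := by
      rw [← Matrix.mul_kronecker_mul, ← Matrix.mul_kronecker_mul, my_s12, my_s13, my_s21,
        my_s31, Matrix.smul_kronecker, Matrix.kronecker_smul, smul_smul,
        Matrix.smul_kronecker, Matrix.kronecker_smul, smul_smul]
      congr 1
      ring
    have cA3 : (σ 1 ⊗ₖ σ 1) * (σ 3 ⊗ₖ σ 2) = (σ 3 ⊗ₖ σ 2) * (σ 1 ⊗ₖ σ 1) := by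
      rw [← Matrix.mul_kronecker_mul, ← Matrix.mul_kronecker_mul, my_s13, my_s12, my_s31,
        my_s21, Matrix.smul_kronecker, Matrix.kronecker_smul, smul_smul,
        Matrix.smul_kronecker, Matrix.kronecker_smul, smul_smul]
      congr 1
      ring
    have cA4 : (σ 1 ⊗ₖ σ 1) * (σ 1 ⊗ₖ (1:M2)) = (σ 1 ⊗ₖ (1:M2)) * (σ 1 ⊗ₖ σ 1) := by
      rw [← Matrix.mul_kronecker_mul, ← Matrix.mul_kronecker_mul, mul_one, one_mul, my_s11]
    rw [hNdecomp]
    rw [my_conj_anti γ _ _ my_hCC pC', pC, my_smul_comb]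
    rw [my_conj_distrib]
    rw [my_conj_anti β _ _ my_hBB pB1', pB1, my_smul_comb']
    rw [my_conj_anti β _ _ my_hBB pB2', pB2, my_smul_comb]
    rw [my_conj_distrib]
    rw [my_conj_distrib, my_conj_distrib]
    rw [my_conj_comm α _ _ my_hAA cA1, my_conj_comm α _ _ my_hAA cA2,
      my_conj_comm α _ _ my_hAA cA3, my_conj_comm α _ _ my_hAA cA4]
    simp only [show (1:M2) = σ 0 from rfl, map_add, _root_.map_smul, hE]
    simp only [show ((1:Fin 4) = 0) = False from by decide,
      show ((2:Fin 4) = 0) = False from by decide,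
      show ((3:Fin 4) = 0) = False from by decide,
      if_false, eq_self_iff_true, if_true, smul_zero, add_zero, zero_add]
    match_scalars <;> (push_cast; ring)
  · -- goal 2 : X₂ = 1 ⊗ σ₂
    have pC : (σ 3 ⊗ₖ σ 3) * ((1:M2) ⊗ₖ σ 2) = (-Complex.I) • (σ 3 ⊗ₖ σ 1) := by
      rw [← Matrix.mul_kronecker_mul, mul_one, my_s32, Matrix.kronecker_smul]
    have pC' : ((1:M2) ⊗ₖ σ 2) * (σ 3 ⊗ₖ σ 3) = -((σ 3 ⊗ₖ σ 3) * ((1:M2) ⊗ₖ σ 2)) := by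
      rw [pC, ← Matrix.mul_kronecker_mul, one_mul, my_s23, Matrix.kronecker_smul, neg_smul,
        neg_neg]
    have cB1 : (σ 2 ⊗ₖ σ 2) * ((1:M2) ⊗ₖ σ 2) = ((1:M2) ⊗ₖ σ 2) * (σ 2 ⊗ₖ σ 2) := by
      rw [← Matrix.mul_kronecker_mul, ← Matrix.mul_kronecker_mul, mul_one, one_mul, my_s22]
    have cB2 : (σ 2 ⊗ₖ σ 2) * (σ 3 ⊗ₖ σ 1) = (σ 3 ⊗ₖ σ 1) * (σ 2 ⊗ₖ σ 2) := by
      rw [← Matrix.mul_kronecker_mul, ← Matrix.mul_kronecker_mul, my_s23, my_s21, my_s32,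
        my_s12, Matrix.smul_kronecker, Matrix.kronecker_smul, smul_smul,
        Matrix.smul_kronecker, Matrix.kronecker_smul, smul_smul]
      congr 1
      ring
    have pA1 : (σ 1 ⊗ₖ σ 1) * ((1:M2) ⊗ₖ σ 2) = Complex.I • (σ 1 ⊗ₖ σ 3) := by
      rw [← Matrix.mul_kronecker_mul, mul_one, my_s12, Matrix.kronecker_smul]
    have pA1' : ((1:M2) ⊗ₖ σ 2) * (σ 1 ⊗ₖ σ 1) = -((σ 1 ⊗ₖ σ 1) * ((1:M2) ⊗ₖ σ 2)) := by
      rw [pA1, ← Matrix.mul_kronecker_mul, one_mul, my_s21, Matrix.kronecker_smul, neg_smul]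
    have pA2 : (σ 1 ⊗ₖ σ 1) * (σ 3 ⊗ₖ σ 1) = (-Complex.I) • (σ 2 ⊗ₖ (1:M2)) := by
      rw [← Matrix.mul_kronecker_mul, my_s13, my_s11, Matrix.smul_kronecker]
    have pA2' : (σ 3 ⊗ₖ σ 1) * (σ 1 ⊗ₖ σ 1) = -((σ 1 ⊗ₖ σ 1) * (σ 3 ⊗ₖ σ 1)) := by
      rw [pA2, ← Matrix.mul_kronecker_mul, my_s31, my_s11, Matrix.smul_kronecker, neg_smul,
        neg_neg]
    rw [hNdecomp]
    rw [my_conj_anti γ _ _ my_hCC pC', pC, my_smul_comb']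
    rw [my_conj_distrib]
    rw [my_conj_comm β _ _ my_hBB cB1, my_conj_comm β _ _ my_hBB cB2]
    rw [my_conj_distrib]
    rw [my_conj_anti α _ _ my_hAA pA1', pA1, my_smul_comb]
    rw [my_conj_anti α _ _ my_hAA pA2', pA2, my_smul_comb']
    simp only [show (1:M2) = σ 0 from rfl, map_add, _root_.map_smul, hE]
    simp only [show ((1:Fin 4) = 0) = False from by decide,
      show ((2:Fin 4) = 0) = False from by decide,
      show ((3:Fin 4) = 0) = False from by decide,
      if_false, eq_self_iff_true, if_true, smul_zero, add_zero, zero_add]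
    match_scalars <;> (push_cast; ring)
  · -- goal 3 : X₃ = 1 ⊗ σ₃
    have cC1 : (σ 3 ⊗ₖ σ 3) * ((1:M2) ⊗ₖ σ 3) = ((1:M2) ⊗ₖ σ 3) * (σ 3 ⊗ₖ σ 3) := by
      rw [← Matrix.mul_kronecker_mul, ← Matrix.mul_kronecker_mul, mul_one, one_mul, my_s33]
    have pB : (σ 2 ⊗ₖ σ 2) * ((1:M2) ⊗ₖ σ 3) = Complex.I • (σ 2 ⊗ₖ σ 1) := by
      rw [← Matrix.mul_kronecker_mul, mul_one, my_s23, Matrix.kronecker_smul]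
    have pB' : ((1:M2) ⊗ₖ σ 3) * (σ 2 ⊗ₖ σ 2) = -((σ 2 ⊗ₖ σ 2) * ((1:M2) ⊗ₖ σ 3)) := by
      rw [pB, ← Matrix.mul_kronecker_mul, one_mul, my_s32, Matrix.kronecker_smul, neg_smul]
    have pA1 : (σ 1 ⊗ₖ σ 1) * ((1:M2) ⊗ₖ σ 3) = (-Complex.I) • (σ 1 ⊗ₖ σ 2) := by
      rw [← Matrix.mul_kronecker_mul, mul_one, my_s13, Matrix.kronecker_smul]
    have pA1' : ((1:M2) ⊗ₖ σ 3) * (σ 1 ⊗ₖ σ 1) = -((σ 1 ⊗ₖ σ 1) * ((1:M2) ⊗ₖ σ 3)) := by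
      rw [pA1, ← Matrix.mul_kronecker_mul, one_mul, my_s31, Matrix.kronecker_smul, neg_smul,
        neg_neg]
    have pA2 : (σ 1 ⊗ₖ σ 1) * (σ 2 ⊗ₖ σ 1) = Complex.I • (σ 3 ⊗ₖ (1:M2)) := by
      rw [← Matrix.mul_kronecker_mul, my_s12, my_s11, Matrix.smul_kronecker]
    have pA2' : (σ 2 ⊗ₖ σ 1) * (σ 1 ⊗ₖ σ 1) = -((σ 1 ⊗ₖ σ 1) * (σ 2 ⊗ₖ σ 1)) := by
      rw [pA2, ← Matrix.mul_kronecker_mul, my_s21, my_s11, Matrix.smul_kronecker, neg_smul]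
    rw [hNdecomp]
    rw [my_conj_comm γ _ _ my_hCC cC1]
    rw [my_conj_anti β _ _ my_hBB pB', pB, my_smul_comb]
    rw [my_conj_distrib]
    rw [my_conj_anti α _ _ my_hAA pA1', pA1, my_smul_comb']
    rw [my_conj_anti α _ _ my_hAA pA2', pA2, my_smul_comb]
    simp only [show (1:M2) = σ 0 from rfl, map_add, _root_.map_smul, hE]
    simp only [show ((1:Fin 4) = 0) = False from by decide,
      show ((2:Fin 4) = 0) = False from by decide,
      show ((3:Fin 4) = 0) = False from by decide,
      if_false, eq_self_iff_true, if_true, smul_zero, add_zero, zero_add]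
    match_scalars <;> (push_cast; ring)
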